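/- Let G be a finite connected simple graph on n ≥ 2 vertices whose resistance curvature satisfies κ_i ≥ K for all vertices i, for some K > 0. Then K ≤ (1/2)·n/(n−1). -/

import Mathlib

open Finset SimpleGraph Matrix

/-- The resistance matrix of a graph: `Ω i j = Γ⁻¹ i i + Γ⁻¹ j j - 2 Γ⁻¹ i j`
where `Γ = L + (1/n) J` with `L` the Laplacian and `J` the all-ones matrix. -/
noncomputable def resistanceMatrix {V : Type*} [Fintype V] [DecidableEq V]
    (G : SimpleGraph V) [DecidableRel G.Adj] : Matrix V V ℝ :=
  Matrix.of fun i j =>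
    letI Γinv := (G.lapMatrix ℝ + Matrix.of fun _ _ => (1 : ℝ) / Fintype.card V)⁻¹
    Γinv i i + Γinv j j - 2 * Γinv i j

/-! Since `Γ = L + J/n` is positive definite and fixes the all-ones vector, `Ωᵢⱼ` is the
squared `Γ⁻¹`-norm of `eᵢ - eⱼ`, hence nonnegative, and the sum of `Ω` over ordered adjacent
pairs is `2 tr(L Γ⁻¹) = 2 (tr(Γ Γ⁻¹) - tr(J Γ⁻¹)/n) = 2 (n - 1)` (Foster). Summing the rows
of `Ω κ = 1` with `κ ≥ K` gives `K · Σᵢⱼ Ωᵢⱼ ≤ n`, while `Σᵢⱼ Ωᵢⱼ ≥ 2 (n - 1)`. -/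

theorem Matrix.PosSemidef.diag_add_diag_sub_two_mul_nonneg {n : Type*} [Fintype n]
    [DecidableEq n] {M : Matrix n n ℝ} (hM : M.PosSemidef) (i j : n) :
    0 ≤ M i i + M j j - 2 * M i j := by
  have h := hM.dotProduct_mulVec_nonneg (Pi.single i 1 - Pi.single j 1)
  have hsymm : M j i = M i j := hM.isHermitian.apply i j
  simp only [star_trivial, mulVec_sub, mulVec_single_one, sub_dotProduct, dotProduct_sub,
    single_one_dotProduct, col_apply] at h
  linarith

theorem mul_sum_sum_le_card_of_mulVec_eq_one {V : Type*} [Fintype V] {A : Matrix V V ℝ}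
    (hA : ∀ i j, 0 ≤ A i j) {κ : V → ℝ} (hκ : A *ᵥ κ = fun _ => 1) {K : ℝ}
    (hK : ∀ i, K ≤ κ i) : K * ∑ i, ∑ j, A i j ≤ Fintype.card V := by
  have hrow (i : V) : K * ∑ j, A i j ≤ 1 := calc
    K * ∑ j, A i j = ∑ j, A i j * K := by rw [mul_sum]; simp_rw [mul_comm]
    _ ≤ ∑ j, A i j * κ j := sum_le_sum fun j _ => mul_le_mul_of_nonneg_left (hK j) (hA i j)
    _ = 1 := congrFun hκ i
  calc K * ∑ i, ∑ j, A i j = ∑ i, K * ∑ j, A i j := mul_sum _ _ _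
    _ ≤ ∑ _ : V, (1 : ℝ) := sum_le_sum fun i _ => hrow i
    _ = Fintype.card V := by simp

namespace SimpleGraph

variable {V : Type*} [Fintype V] [DecidableEq V] (G : SimpleGraph V) [DecidableRel G.Adj]

theorem sum_adj_diag_add_diag_sub_two_mul_eq (M : Matrix V V ℝ) :
    ∑ i, ∑ j, (if G.Adj i j then M i i + M j j - 2 * M i j else 0) =
      2 * (G.lapMatrix ℝ * M).trace := by
  have hdeg : ∑ i, ∑ j, (if G.Adj i j then M i i else 0) = ∑ i, G.degree i * M i i := by
    refine sum_congr rfl fun i _ => ?_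
    rw [G.degree_eq_sum_if_adj, sum_mul]
    simp only [ite_mul, one_mul, zero_mul]
  have hdeg' : ∑ i, ∑ j, (if G.Adj i j then M j j else 0) = ∑ i, G.degree i * M i i := by
    rw [sum_comm, ← hdeg]; simp_rw [G.adj_comm]
  have hadj : ∑ i, ∑ j, (if G.Adj i j then M j i else 0) =
      ∑ i, ∑ j, (if G.Adj i j then M i j else 0) := by
    rw [sum_comm]; simp_rw [G.adj_comm]
  have htr : (G.lapMatrix ℝ * M).trace =
      ∑ i, G.degree i * M i i - ∑ i, ∑ j, (if G.Adj i j then M j i else 0) := by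
    simp [lapMatrix, Matrix.sub_mul, trace, degMatrix, adjMatrix, Matrix.mul_apply, diagonal_apply]
  have hsplit (i j : V) : (if G.Adj i j then M i i + M j j - 2 * M i j else 0) =
      (if G.Adj i j then M i i else 0) + (if G.Adj i j then M j j else 0) -
        2 * (if G.Adj i j then M i j else 0) := by
    split_ifs <;> ring
  simp only [hsplit, sum_add_distrib, sum_sub_distrib, ← mul_sum]
  rw [htr, hadj, hdeg, hdeg']
  ring

noncomputable def lapMatrixAddConst (c : ℝ) : Matrix V V ℝ :=
  G.lapMatrix ℝ + of fun _ _ => c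

theorem lapMatrixAddConst_mulVec_one (c : ℝ) :
    G.lapMatrixAddConst c *ᵥ (fun _ => 1) = fun _ => c * Fintype.card V := by
  rw [lapMatrixAddConst, add_mulVec, lapMatrix_mulVec_const_eq_zero, zero_add]
  ext i
  simp [mulVec, dotProduct, mul_comm]

theorem posDef_lapMatrixAddConst (hG : G.Connected) {c : ℝ} (hc : 0 < c) :
    (G.lapMatrixAddConst c).PosDef := by
  refine .of_dotProduct_mulVec_pos ?_ fun x hx => ?_
  · exact (G.isHermitian_lapMatrix ℝ).add (by ext; simp)
  have hconst : x ⬝ᵥ ((of fun _ _ => c) *ᵥ x) = c * (∑ i, x i) ^ 2 := by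
    simp only [dotProduct, mulVec, of_apply, ← mul_sum, ← sum_mul]
    ring
  have hlap := (G.posSemidef_lapMatrix ℝ).dotProduct_mulVec_nonneg x
  rw [star_trivial] at hlap ⊢
  rw [lapMatrixAddConst, add_mulVec, dotProduct_add, hconst]
  by_contra! hle
  have hsq := mul_nonneg hc.le (sq_nonneg (∑ i, x i))
  have hlap0 : x ⬝ᵥ (G.lapMatrix ℝ *ᵥ x) = 0 := by linarith
  have hsum : ∑ i, x i = 0 :=
    pow_eq_zero_iff two_ne_zero |>.mp <| (mul_eq_zero.mp (by linarith)).resolve_left hc.ne'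
  have heq : ∀ i j, x i = x j := fun i j =>
    (G.lapMatrix_toLinearMap₂'_apply'_eq_zero_iff_forall_reachable x).mp
      (by rwa [toLinearMap₂'_apply']) i j (hG.preconnected i j)
  refine hx (funext fun i => ?_)
  have hcard : (Fintype.card V : ℝ) * x i = 0 := by
    rw [← hsum, sum_congr rfl fun j _ => heq j i]
    simp
  have : Nonempty V := hG.nonempty
  simpa using hcard

section Resistance

variable {G}

local notation "Γ" => G.lapMatrixAddConst (1 / Fintype.card V)

theorem resistanceMatrix_apply (i j : V) :
    resistanceMatrix G i j = Γ⁻¹ i i + Γ⁻¹ j j - 2 * Γ⁻¹ i j :=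
  rfl

theorem posDef_lapMatrixAddConst_inv_card (hG : G.Connected) : Matrix.PosDef Γ :=
  have : Nonempty V := hG.nonempty
  G.posDef_lapMatrixAddConst hG (one_div_pos.mpr (Nat.cast_pos.mpr Fintype.card_pos))

theorem isUnit_det_lapMatrixAddConst_inv_card (hG : G.Connected) : IsUnit (Matrix.det Γ) :=
  (isUnit_iff_isUnit_det _).mp (posDef_lapMatrixAddConst_inv_card hG).isUnit

theorem inv_lapMatrixAddConst_mulVec_one (hG : G.Connected) :
    Γ⁻¹ *ᵥ (fun _ => 1) = fun _ => 1 := by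
  have : Nonempty V := hG.nonempty
  have hΓ : Γ *ᵥ (fun _ => 1) = fun _ => 1 := by
    rw [lapMatrixAddConst_mulVec_one]
    ext; field_simp
  conv_lhs => rw [← hΓ, mulVec_mulVec,
    nonsing_inv_mul _ (isUnit_det_lapMatrixAddConst_inv_card hG), one_mulVec]

theorem trace_lapMatrix_mul_inv (hG : G.Connected) :
    (G.lapMatrix ℝ * Γ⁻¹).trace = Fintype.card V - 1 := by
  have : Nonempty V := hG.nonempty
  have hΓ : (Γ * Γ⁻¹).trace = Fintype.card V := by
    rw [mul_nonsing_inv _ (isUnit_det_lapMatrixAddConst_inv_card hG), trace_one]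
  have hconst : ((of fun _ _ => (1 : ℝ) / Fintype.card V) * Γ⁻¹).trace = 1 := by
    have hrow (k : V) : ∑ i, Γ⁻¹ k i = 1 := by
      simpa [mulVec, dotProduct] using congrFun (inv_lapMatrixAddConst_mulVec_one hG) k
    simp only [trace, diag_apply, Matrix.mul_apply, of_apply]
    rw [sum_comm]
    simp only [← mul_sum, hrow]
    field_simp
    simp
  have hlap : G.lapMatrix ℝ = Γ - of fun _ _ => (1 : ℝ) / Fintype.card V := by
    rw [lapMatrixAddConst, add_sub_cancel_right]
  rw [hlap, Matrix.sub_mul, trace_sub, hΓ, hconst]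

theorem sum_adj_resistanceMatrix (hG : G.Connected) :
    ∑ i, ∑ j, (if G.Adj i j then resistanceMatrix G i j else 0) = 2 * (Fintype.card V - 1) := by
  simp only [resistanceMatrix_apply]
  rw [sum_adj_diag_add_diag_sub_two_mul_eq, trace_lapMatrix_mul_inv hG]

theorem resistanceMatrix_nonneg (hG : G.Connected) (i j : V) : 0 ≤ resistanceMatrix G i j :=
  (posDef_lapMatrixAddConst_inv_card hG).inv.posSemidef.diag_add_diag_sub_two_mul_nonneg i j

theorem two_mul_card_sub_one_le_sum_resistanceMatrix (hG : G.Connected) :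
    2 * (Fintype.card V - 1) ≤ ∑ i, ∑ j, resistanceMatrix G i j := by
  rw [← sum_adj_resistanceMatrix hG]
  gcongr with i _ j _
  split_ifs
  exacts [le_rfl, resistanceMatrix_nonneg hG i j]

end Resistance

end SimpleGraph

theorem curvature_le_of_lower_bound_general
    {V : Type*} [Fintype V] [DecidableEq V]
    (G : SimpleGraph V) [DecidableRel G.Adj]
    (hconn : G.Connected) (hn : 2 ≤ Fintype.card V)
    (κ : V → ℝ) (hκ : resistanceMatrix G *ᵥ κ = fun _ => 1)
    (K : ℝ) (hcurv : ∀ i, K ≤ κ i) :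
    K ≤ (1 / 2) * (Fintype.card V : ℝ) / ((Fintype.card V : ℝ) - 1) := by
  have hn1 : (0 : ℝ) < Fintype.card V - 1 := by
    have : (2 : ℝ) ≤ Fintype.card V := by exact_mod_cast hn
    linarith
  set n : ℝ := (Fintype.card V : ℝ)
  set S := ∑ i, ∑ j, resistanceMatrix G i j
  have hKS : K * S ≤ n :=
    mul_sum_sum_le_card_of_mulVec_eq_one (resistanceMatrix_nonneg hconn) hκ hcurv
  have hS : 2 * (n - 1) ≤ S := two_mul_card_sub_one_le_sum_resistanceMatrix hconn
  calc K ≤ n / S := by rw [le_div_iff₀ (by linarith)]; linarith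
    _ ≤ n / (2 * (n - 1)) := by gcongr
    _ = 1 / 2 * n / (n - 1) := by field_simp

/-- If the resistance curvature of a connected graph on `n ≥ 2` vertices is bounded
below by `K > 0`, then `K ≤ (1/2) · n/(n-1)`. -/
theorem curvature_le_of_lower_bound
    {V : Type*} [Fintype V] [DecidableEq V]
    (G : SimpleGraph V) [DecidableRel G.Adj]
    (hconn : G.Connected) (hn : 2 ≤ Fintype.card V)
    (κ : V → ℝ) (hκ : resistanceMatrix G *ᵥ κ = fun _ => 1)
    (K : ℝ) (hK : 0 < K) (hcurv : ∀ i, K ≤ κ i) :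
    K ≤ (1 / 2) * (Fintype.card V : ℝ) / ((Fintype.card V : ℝ) - 1) :=
  curvature_le_of_lower_bound_general G hconn hn κ hκ K hcurv
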